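/- arXiv:2302.08791 — 6 statements merged into one kernel-verified Lean document; each statement's English description precedes it below -/
import Mathlib

section
/- Let b ≥ 1 be an integer. In any jammed configuration of Rydberg atoms on a line of L sites (a 0/1 sequence where every two 1's are at least b+1 apart, and every maximal run of 0's strictly between two 1's has length at most 2b, while runs of 0's at either end have length at most b), the number N of 1's satisfies ⌈L/(2b+1)⌉ ≤ N ≤ ⌈L/(b+1)⌉. -/
/-- A configuration of Rydberg atoms on sites `{0, ..., L-1}` given by the set `S` of
excited sites is admissible for blockade range `b` if every two excited sites
are at least `b+1` apart. -/
def RydAdmissible (b L : ℕ) (S : Finset ℕ) : Prop :=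
  S ⊆ Finset.range L ∧ ∀ i ∈ S, ∀ j ∈ S, i < j → b + 1 ≤ j - i

/-- A configuration is jammed if it is admissible and no further site can be excited
while preserving admissibility. -/
def RydJammed (b L : ℕ) (S : Finset ℕ) : Prop :=
  RydAdmissible b L S ∧ ∀ t < L, t ∉ S → ¬ RydAdmissible b L (insert t S)

/-- In any jammed configuration of length `L` with blockade range `b ≥ 1`, the number
`N` of excited atoms satisfies `⌈L/(2b+1)⌉ ≤ N ≤ ⌈L/(b+1)⌉`. -/
theorem stmt0 (b L : ℕ) (hb : 1 ≤ b) (S : Finset ℕ) (hS : RydJammed b L S) :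
    (L + 2 * b) / (2 * b + 1) ≤ S.card ∧ S.card ≤ (L + b) / (b + 1) := by
  obtain ⟨⟨hsub, hsp⟩, hjam⟩ := hS
  constructor
  · -- lower bound: every site is within b of an excited site
    have hcov : Finset.range L ⊆ S.biUnion (fun s => Finset.Icc (s - b) (s + b)) := by
      intro t ht
      simp only [Finset.mem_range] at ht
      by_cases htS : t ∈ S
      · exact Finset.mem_biUnion.2 ⟨t, htS,
          Finset.mem_Icc.2 ⟨Nat.sub_le _ _, Nat.le_add_right _ _⟩⟩
      · have h := hjam t ht htS
        rw [RydAdmissible] at h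
        push_neg at h
        have hsub' : insert t S ⊆ Finset.range L := by
          intro x hx
          rcases Finset.mem_insert.1 hx with rfl | hx
          · exact Finset.mem_range.2 ht
          · exact hsub hx
        obtain ⟨i, hi, j, hj, hij, hlt⟩ := h hsub'
        rcases Finset.mem_insert.1 hi with rfl | hiS
        · rcases Finset.mem_insert.1 hj with rfl | hjS
          · omega
          · exact Finset.mem_biUnion.2 ⟨j, hjS, Finset.mem_Icc.2 ⟨by omega, by omega⟩⟩
        · rcases Finset.mem_insert.1 hj with rfl | hjS
          · exact Finset.mem_biUnion.2 ⟨i, hiS, Finset.mem_Icc.2 ⟨by omega, by omega⟩⟩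
          · exact absurd (hsp i hiS j hjS hij) (by omega)
    have hL : L ≤ S.card * (2 * b + 1) := by
      calc L = (Finset.range L).card := (Finset.card_range L).symm
        _ ≤ (S.biUnion (fun s => Finset.Icc (s - b) (s + b))).card :=
            Finset.card_le_card hcov
        _ ≤ ∑ s ∈ S, (Finset.Icc (s - b) (s + b)).card := Finset.card_biUnion_le
        _ ≤ ∑ _s ∈ S, (2 * b + 1) :=
            Finset.sum_le_sum (fun s _ => by rw [Nat.card_Icc]; omega)
        _ = S.card * (2 * b + 1) := by rw [Finset.sum_const, smul_eq_mul]
    have h1 : L + 2 * b ≤ (2 * b + 1) * S.card + 2 * b := by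
      rw [mul_comm (2 * b + 1) S.card]; omega
    calc (L + 2 * b) / (2 * b + 1)
        ≤ ((2 * b + 1) * S.card + 2 * b) / (2 * b + 1) := Nat.div_le_div_right h1
      _ = S.card + 2 * b / (2 * b + 1) := Nat.mul_add_div (by omega) _ _
      _ = S.card := by rw [Nat.div_eq_of_lt (by omega), Nat.add_zero]
  · -- upper bound: i ↦ i / (b+1) is injective on S
    have hinj : Set.InjOn (fun i => i / (b + 1)) S := by
      intro i hi j hj hij
      by_contra hne
      have key : ∀ x y : ℕ, x ∈ S → y ∈ S → x < y → x / (b + 1) < y / (b + 1) := by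
        intro x y hx hy hxy
        have hgap := hsp x hx y hy hxy
        calc x / (b + 1) < x / (b + 1) + 1 := Nat.lt_succ_self _
          _ = (x + (b + 1)) / (b + 1) := (Nat.add_div_right _ (by omega)).symm
          _ ≤ y / (b + 1) := Nat.div_le_div_right (by omega)
      rcases Nat.lt_trichotomy i j with h | h | h
      · exact absurd hij (Nat.ne_of_lt (key i j hi hj h))
      · exact hne h
      · exact absurd hij.symm (Nat.ne_of_lt (key j i hj hi h))
    have hmaps : ∀ i ∈ S, i / (b + 1) ∈ Finset.range ((L + b) / (b + 1)) := by
      intro i hi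
      have hiL : i < L := Finset.mem_range.1 (hsub hi)
      have : i / (b + 1) + 1 ≤ (L + b) / (b + 1) := by
        calc i / (b + 1) + 1 = (i + (b + 1)) / (b + 1) :=
              (Nat.add_div_right _ (by omega)).symm
          _ ≤ (L + b) / (b + 1) := Nat.div_le_div_right (by omega)
      exact Finset.mem_range.2 (by omega)
    calc S.card ≤ (Finset.range ((L + b) / (b + 1))).card :=
          Finset.card_le_card_of_injOn _ hmaps hinj
      _ = (L + b) / (b + 1) := Finset.card_range _
end

section
/- For b ≥ 1, the generating-function identity 1 + s·e/(1 - p) = ((1-y)² + xy - xy^{b+1} - xy^{b+2} + xy^{2b+2}) / ((1-y)(1 - y - xy^{b+1} + xy^{2b+2})) holds as an identity of rational functions, where p = x(y^{b+1} + y^{b+2} + ⋯ + y^{2b+1}), s = 1 + y + ⋯ + y^b, and e = x(y + y² + ⋯ + y^{b+1}). -/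
/-! With `G = 1 + y + ⋯ + y ^ b` and `z = y ^ (b + 1)` one has `s = G`, `e = x y G`,
`p = x z G` and `(1 - y) G = 1 - z`, so the identity becomes a rational identity in `x, y, z`
that is checked by clearing denominators. -/

open Finset

theorem sum_Icc_pow_eq_pow_mul_geom_sum {R : Type*} [CommSemiring R] (a n : ℕ) (y : R) :
    ∑ i ∈ Icc a (a + n), y ^ i = y ^ a * ∑ i ∈ range (n + 1), y ^ i := by
  rw [← Ico_add_one_right_eq_Icc, sum_Ico_eq_sum_range, mul_sum, Nat.add_assoc,
    Nat.add_sub_cancel_left]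
  simp only [pow_add]

theorem jammed_identity_of_mul_eq {K : Type*} [Field K] (x y z G : K)
    (hG : (1 - y) * G = 1 - z) (h1 : 1 - y ≠ 0) (hd : 1 - y - x * z + x * z ^ 2 ≠ 0) :
    1 + G * (x * (y * G)) / (1 - x * (z * G)) =
      ((1 - y) ^ 2 + x * y - x * z - x * (y * z) + x * z ^ 2) /
        ((1 - y) * (1 - y - x * z + x * z ^ 2)) := by
  have hG' : G = (1 - z) / (1 - y) := by rw [← hG, mul_div_cancel_left₀ _ h1]
  have hden : 1 - x * (z * G) = (1 - y - x * z + x * z ^ 2) / (1 - y) := by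
    rw [hG']
    field_simp
    ring
  rw [hden, hG', eq_div_iff (mul_ne_zero h1 hd), add_mul, one_mul]
  field_simp
  ring

theorem stmt1_general (b : ℕ) (x y : ℝ)
    (h1 : (1 : ℝ) - y ≠ 0)
    (hd : (1 : ℝ) - y - x * y ^ (b + 1) + x * y ^ (2 * b + 2) ≠ 0) :
    1 + (∑ i ∈ Finset.range (b + 1), y ^ i) * (x * ∑ i ∈ Finset.Icc 1 (b + 1), y ^ i) /
        (1 - x * ∑ i ∈ Finset.Icc (b + 1) (2 * b + 1), y ^ i) =
      ((1 - y) ^ 2 + x * y - x * y ^ (b + 1) - x * y ^ (b + 2) + x * y ^ (2 * b + 2)) /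
        ((1 - y) * (1 - y - x * y ^ (b + 1) + x * y ^ (2 * b + 2))) := by
  have he : ∑ i ∈ Icc 1 (b + 1), y ^ i = y * ∑ i ∈ range (b + 1), y ^ i := by
    simpa only [add_comm 1 b, pow_one] using sum_Icc_pow_eq_pow_mul_geom_sum 1 b y
  have hp : ∑ i ∈ Icc (b + 1) (2 * b + 1), y ^ i
      = y ^ (b + 1) * ∑ i ∈ range (b + 1), y ^ i := by
    rw [show 2 * b + 1 = b + 1 + b by ring, sum_Icc_pow_eq_pow_mul_geom_sum]
  have hz1 : y ^ (b + 2) = y * y ^ (b + 1) := pow_succ' y (b + 1)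
  have hz2 : y ^ (2 * b + 2) = (y ^ (b + 1)) ^ 2 := by rw [← pow_mul]; ring_nf
  rw [hz2] at hd
  rw [he, hp, hz1, hz2]
  refine jammed_identity_of_mul_eq x y _ _ ?_ h1 hd
  rw [mul_comm, geom_sum_mul_neg]

/-- Generating-function identity for jammed Rydberg configurations with blockade range `b`:
`1 + s·e/(1-p)` equals the claimed rational expression, for real `x, y` with all
denominators nonzero. -/
theorem stmt1 (b : ℕ) (hb : 1 ≤ b) (x y : ℝ)
    (h1 : (1 : ℝ) - y ≠ 0)
    (hp : (1 : ℝ) - x * ∑ i ∈ Finset.Icc (b + 1) (2 * b + 1), y ^ i ≠ 0)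
    (hd : (1 : ℝ) - y - x * y ^ (b + 1) + x * y ^ (2 * b + 2) ≠ 0) :
    1 + (∑ i ∈ Finset.range (b + 1), y ^ i) * (x * ∑ i ∈ Finset.Icc 1 (b + 1), y ^ i) /
        (1 - x * ∑ i ∈ Finset.Icc (b + 1) (2 * b + 1), y ^ i) =
      ((1 - y) ^ 2 + x * y - x * y ^ (b + 1) - x * y ^ (b + 2) + x * y ^ (2 * b + 2)) /
        ((1 - y) * (1 - y - x * y ^ (b + 1) + x * y ^ (2 * b + 2))) :=
  stmt1_general b x y h1 hd
end

section
/- Let b ≥ 1 and let z(b) ∈ (0,1) be the unique root of z^{b+1} + z^{b+2} + ⋯ + z^{2b+1} = 1. Then z(b)^{2b+1} → 0, z(b)^{b+1} → 0, and z(b) → 1 as b → ∞. -/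
open Finset Filter

private lemma key (z : ℕ → ℝ) (b : ℕ) (hb : 1 ≤ b) (h0 : 0 < z b) (h1 : z b < 1)
    (hs : ∑ i ∈ Finset.Icc (b + 1) (2 * b + 1), (z b) ^ i = 1) :
    ((b:ℝ) + 1) * (z b) ^ (2 * b + 1) ≤ 1 ∧ 1 ≤ ((b:ℝ) + 1) * (z b) ^ (b + 1) := by
  have hcard : (Finset.Icc (b + 1) (2 * b + 1)).card = b + 1 := by
    rw [Nat.card_Icc]; omega
  constructor
  · have := Finset.card_nsmul_le_sum (Finset.Icc (b + 1) (2 * b + 1))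
      (fun i => (z b) ^ i) ((z b) ^ (2 * b + 1)) (fun i hi => by
        simp only [Finset.mem_Icc] at hi
        exact pow_le_pow_of_le_one h0.le h1.le hi.2)
    rw [hcard, hs, nsmul_eq_mul] at this
    push_cast at this
    linarith
  · have := Finset.sum_le_card_nsmul (Finset.Icc (b + 1) (2 * b + 1))
      (fun i => (z b) ^ i) ((z b) ^ (b + 1)) (fun i hi => by
        simp only [Finset.mem_Icc] at hi
        exact pow_le_pow_of_le_one h0.le h1.le hi.1)
    rw [hcard, hs, nsmul_eq_mul] at this
    push_cast at this
    linarith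

/-- If `z b ∈ (0,1)` denotes the root of `z^{b+1} + ⋯ + z^{2b+1} = 1`, then
`z(b)^{2b+1} → 0`, `z(b)^{b+1} → 0` and `z(b) → 1` as `b → ∞`. -/
theorem stmt8 (z : ℕ → ℝ)
    (hz : ∀ b, 1 ≤ b → 0 < z b ∧ z b < 1 ∧
      ∑ i ∈ Finset.Icc (b + 1) (2 * b + 1), (z b) ^ i = 1) :
    Tendsto (fun b => (z b) ^ (2 * b + 1)) atTop (nhds 0) ∧
      Tendsto (fun b => (z b) ^ (b + 1)) atTop (nhds 0) ∧
      Tendsto z atTop (nhds 1) := by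
  have hinv : Tendsto (fun b : ℕ => ((b:ℝ) + 1)⁻¹) atTop (nhds 0) :=
    tendsto_one_div_add_atTop_nhds_zero_nat.congr (fun n => one_div _)
  have hub : ∀ᶠ b in atTop, (z b) ^ (2 * b + 1) ≤ ((b:ℝ) + 1)⁻¹ := by
    filter_upwards [eventually_ge_atTop 1] with b hb
    obtain ⟨h0, h1, hs⟩ := hz b hb
    have h := (key z b hb h0 h1 hs).1
    have hb1 : (0:ℝ) < (b:ℝ) + 1 := by positivity
    rw [← one_div, le_div_iff₀ hb1]
    linarith
  have hlb0 : ∀ᶠ b in atTop, (0:ℝ) ≤ (z b) ^ (2 * b + 1) := by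
    filter_upwards [eventually_ge_atTop 1] with b hb
    exact (pow_pos (hz b hb).1 _).le
  have h2b : Tendsto (fun b => (z b) ^ (2 * b + 1)) atTop (nhds 0) :=
    tendsto_of_tendsto_of_tendsto_of_le_of_le' tendsto_const_nhds hinv hlb0 hub
  refine ⟨h2b, ?_, ?_⟩
  · have hsq : Tendsto (fun b : ℕ => Real.sqrt (((b:ℝ) + 1)⁻¹)) atTop (nhds 0) := by
      have := hinv.sqrt
      rwa [Real.sqrt_zero] at this
    apply tendsto_of_tendsto_of_tendsto_of_le_of_le' tendsto_const_nhds hsq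
    · filter_upwards [eventually_ge_atTop 1] with b hb
      exact (pow_pos (hz b hb).1 _).le
    · filter_upwards [eventually_ge_atTop 1] with b hb
      obtain ⟨h0, h1, hs⟩ := hz b hb
      have h := (key z b hb h0 h1 hs).1
      have hb1 : (0:ℝ) < (b:ℝ) + 1 := by positivity
      have h2 : (z b) ^ (2 * b + 2) ≤ ((b:ℝ) + 1)⁻¹ := by
        have hle : (z b) ^ (2 * b + 2) ≤ (z b) ^ (2 * b + 1) :=
          pow_le_pow_of_le_one h0.le h1.le (by omega)
        rw [← one_div, le_div_iff₀ hb1]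
        nlinarith
      have hsqle : ((z b) ^ (b + 1)) ^ 2 ≤ ((b:ℝ) + 1)⁻¹ := by
        rw [← pow_mul]; convert h2 using 2; ring
      calc (z b) ^ (b + 1) = Real.sqrt (((z b) ^ (b + 1)) ^ 2) := by
            rw [Real.sqrt_sq (pow_pos h0 _).le]
        _ ≤ Real.sqrt (((b:ℝ) + 1)⁻¹) := Real.sqrt_le_sqrt hsqle
  · have hg : Tendsto (fun b : ℕ => (((b:ℝ) + 1)⁻¹) ^ ((((b:ℝ) + 1))⁻¹ : ℝ)) atTop (nhds 1) := by
      have h1 : Tendsto (fun x : ℝ => x ^ (1 / x)) atTop (nhds 1) := tendsto_rpow_div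
      have h2 : Tendsto (fun b : ℕ => ((b:ℝ) + 1)) atTop atTop :=
        tendsto_atTop_add_const_right _ 1 tendsto_natCast_atTop_atTop
      have h3 := (h1.comp h2).inv₀ one_ne_zero
      simp only [Function.comp] at h3
      rw [inv_one] at h3
      apply h3.congr
      intro b
      rw [one_div, ← Real.inv_rpow (by positivity)]
    apply tendsto_of_tendsto_of_tendsto_of_le_of_le' hg tendsto_const_nhds
    · filter_upwards [eventually_ge_atTop 1] with b hb
      obtain ⟨h0, h1, hs⟩ := hz b hb
      have h := (key z b hb h0 h1 hs).2
      have hb1 : (0:ℝ) < (b:ℝ) + 1 := by positivity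
      have hle : ((b:ℝ) + 1)⁻¹ ≤ (z b) ^ (b + 1) := by
        rw [← one_div, div_le_iff₀ hb1]; linarith
      have := Real.rpow_le_rpow (by positivity) hle (le_of_lt (by positivity :
        (0:ℝ) < ((b:ℝ) + 1)⁻¹))
      calc (((b:ℝ) + 1)⁻¹) ^ ((((b:ℝ) + 1))⁻¹ : ℝ)
          ≤ ((z b) ^ (b + 1) : ℝ) ^ ((((b:ℝ) + 1))⁻¹ : ℝ) := this
        _ = z b := by
            have : (((b:ℝ) + 1))⁻¹ = ((((b + 1 : ℕ)):ℝ))⁻¹ := by push_cast; ring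
            rw [this, Real.pow_rpow_inv_natCast h0.le (by omega)]
    · filter_upwards [eventually_ge_atTop 1] with b hb
      exact (hz b hb).2.1.le
end

section
/- Let b ≥ 1 and let z(b) ∈ (0,1) be the unique root of ∑_{i=b+1}^{2b+1} z^i = 1. Then (b+1)(1 - z(b)) → +∞ as b → ∞. -/
open Finset Filter

/-!
Write `n = b + 1` and `x = z b`. The equation has `n` terms, each between `x ^ (2n-1)` and `x ^ n`,
so `n x ^ n ≥ 1` (whence `x ≥ 1/2`, as `n < 2 ^ n`) and `n x ^ (2n) ≤ 1`. Taking logarithms in the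
second bound, `log n ≤ 2n (-log x) ≤ 2n (1 - x) / x ≤ 4n (1 - x)`, so `n (1 - x) ≥ (log n) / 4 → ∞`.
-/

section PowerSums

variable {x : ℝ} {s : Finset ℕ}

lemma sum_pow_le_card_mul_pow (hx₀ : 0 ≤ x) (hx₁ : x ≤ 1) {m : ℕ} (hs : ∀ i ∈ s, m ≤ i) :
    ∑ i ∈ s, x ^ i ≤ #s * x ^ m := by
  simpa using s.sum_le_card_nsmul (x ^ ·) (x ^ m) fun i hi ↦
    pow_le_pow_of_le_one hx₀ hx₁ (hs i hi)

lemma card_mul_pow_le_sum_pow (hx₀ : 0 ≤ x) (hx₁ : x ≤ 1) {M : ℕ} (hs : ∀ i ∈ s, i ≤ M) :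
    #s * x ^ M ≤ ∑ i ∈ s, x ^ i := by
  simpa using s.card_nsmul_le_sum (x ^ ·) (x ^ M) fun i hi ↦
    pow_le_pow_of_le_one hx₀ hx₁ (hs i hi)

end PowerSums

lemma half_le_of_one_le_mul_pow {x : ℝ} {n : ℕ} (hx : 0 ≤ x) (h : 1 ≤ n * x ^ n) : 1 / 2 ≤ x := by
  by_contra! hlt
  have hn : (n : ℝ) < 2 ^ n := by exact_mod_cast Nat.lt_two_pow_self
  have : (n : ℝ) * x ^ n ≤ n * (1 / 2) ^ n := by gcongr
  have : (n : ℝ) * (1 / 2) ^ n < 1 := by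
    rw [div_pow, one_pow, mul_one_div, div_lt_one (by positivity)]
    exact hn
  linarith

lemma log_le_mul_neg_log_of_mul_pow_le_one {x : ℝ} {n k : ℕ} (hx : 0 < x) (hn : 0 < n)
    (h : n * x ^ k ≤ 1) : Real.log n ≤ k * -Real.log x := by
  have := Real.log_nonpos (by positivity) h
  rw [Real.log_mul (by positivity) (by positivity), Real.log_pow] at this
  linarith

lemma log_div_four_le_mul_one_sub {b : ℕ} {x : ℝ} (hx₀ : 0 < x) (hx₁ : x ≤ 1)
    (hsum : ∑ i ∈ Icc (b + 1) (2 * b + 1), x ^ i = 1) :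
    Real.log (b + 1) / 4 ≤ ((b : ℝ) + 1) * (1 - x) := by
  have hcard : (#(Icc (b + 1) (2 * b + 1)) : ℝ) = b + 1 := by
    rw [Nat.card_Icc]; push_cast [show 2 * b + 1 + 1 - (b + 1) = b + 1 by omega]; ring
  have hlower : 1 ≤ ((b + 1 : ℕ) : ℝ) * x ^ (b + 1) := by
    have := sum_pow_le_card_mul_pow (s := Icc (b + 1) (2 * b + 1)) hx₀.le hx₁
      fun i hi ↦ (mem_Icc.mp hi).1
    push_cast; rwa [hsum, hcard] at this
  have hupper : ((b + 1 : ℕ) : ℝ) * x ^ (2 * (b + 1)) ≤ 1 := by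
    have := card_mul_pow_le_sum_pow (s := Icc (b + 1) (2 * b + 1)) hx₀.le hx₁
      fun i hi ↦ (mem_Icc.mp hi).2
    rw [hsum, hcard] at this
    push_cast
    calc ((b : ℝ) + 1) * x ^ (2 * (b + 1)) ≤ (b + 1) * x ^ (2 * b + 1) :=
          mul_le_mul_of_nonneg_left (pow_le_pow_of_le_one hx₀.le hx₁ (by omega)) (by positivity)
      _ ≤ 1 := this
  have hhalf := half_le_of_one_le_mul_pow hx₀.le hlower
  have hlog := log_le_mul_neg_log_of_mul_pow_le_one hx₀ b.succ_pos hupper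
  push_cast at hlog
  have hneglog : -Real.log x ≤ 2 * (1 - x) := by
    calc -Real.log x ≤ x⁻¹ - 1 := by linarith [Real.one_sub_inv_le_log_of_pos hx₀]
      _ = (1 - x) * x⁻¹ := by field_simp
      _ ≤ (1 - x) * 2 := by
          gcongr
          rw [inv_le_comm₀ hx₀ two_pos]
          linarith
      _ = 2 * (1 - x) := by ring
  calc Real.log (b + 1) / 4 ≤ 2 * ((b : ℝ) + 1) * -Real.log x / 4 := by gcongr
    _ ≤ 2 * ((b : ℝ) + 1) * (2 * (1 - x)) / 4 := by gcongr
    _ = ((b : ℝ) + 1) * (1 - x) := by ring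

/-- If `z b ∈ (0,1)` denotes the root of `z^{b+1} + ⋯ + z^{2b+1} = 1`, then
`(b+1)(1 - z(b)) → +∞` as `b → ∞`. -/
theorem stmt9 (z : ℕ → ℝ)
    (hz : ∀ b, 1 ≤ b → 0 < z b ∧ z b < 1 ∧
      ∑ i ∈ Finset.Icc (b + 1) (2 * b + 1), (z b) ^ i = 1) :
    Tendsto (fun b : ℕ => ((b : ℝ) + 1) * (1 - z b)) atTop atTop := by
  have hlog : Tendsto (fun b : ℕ ↦ Real.log ((b : ℝ) + 1) / 4) atTop atTop :=
    (Real.tendsto_log_atTop.comp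
      (tendsto_atTop_add_const_right atTop 1 tendsto_natCast_atTop_atTop)).atTop_div_const
      (by norm_num)
  refine tendsto_atTop_mono' atTop ?_ hlog
  filter_upwards [eventually_ge_atTop 1] with b hb
  obtain ⟨hz₀, hz₁, hsum⟩ := hz b hb
  exact log_div_four_le_mul_one_sub hz₀ hz₁.le hsum
end

section
/- Let b ≥ 1, z(b) ∈ (0,1) the unique root of ∑_{i=b+1}^{2b+1} z^i = 1, and define ρ⋆(b) = (1 - z)(1 - z^{b+1}) / (1 + b - bz - 2z^{b+1} - 2bz^{b+1} + z^{b+2} + 2bz^{b+2}) with z = z(b). Then b · ρ⋆(b) → 1 as b → ∞. -/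
/-!
Write `w = z^(b+1)`. Summing the geometric series gives `1 - z = w (1 - w)`, and the sum has
`b + 1` terms, each at least `w²`, so `(b + 1) w² ≤ 1`; hence `w → 0` and `z → 1`. From
`log z⁻¹ ≤ z⁻¹ - 1` we get `z log w⁻¹ ≤ (b + 1)(1 - z) ≤ (b + 1) w`, so `b w → ∞` because
`log w⁻¹ → ∞`. Substituting `z = 1 - w (1 - w)` turns `b ρ⋆(b)` into
`(1 - w) / ((1 - w²) / (b w) + 1 - 2w)`, which tends to `1`.
-/

open Finset Filter Topology

structure IsRydbergRoot (b : ℕ) (z : ℝ) : Prop where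
  pos : 0 < z
  lt_one : z < 1
  sum_Icc_eq_one : ∑ i ∈ Icc (b + 1) (2 * b + 1), z ^ i = 1

/-- `ρ⋆(b)` as a function of the root `z = z(b)`. -/
noncomputable def equilibriumDensity (b : ℕ) (z : ℝ) : ℝ :=
  (1 - z) * (1 - z ^ (b + 1)) /
    (1 + (b : ℝ) - b * z - 2 * z ^ (b + 1) - 2 * b * z ^ (b + 1) + z ^ (b + 2) +
      2 * b * z ^ (b + 2))

namespace IsRydbergRoot

variable {b : ℕ} {z : ℝ}

theorem one_sub_eq (h : IsRydbergRoot b z) : 1 - z = z ^ (b + 1) * (1 - z ^ (b + 1)) := by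
  have hIco : Icc (b + 1) (2 * b + 1) = Ico (b + 1) (2 * b + 2) := by
    ext i; simp only [mem_Icc, mem_Ico]; omega
  have hgeom := geom_sum_Ico_mul z (show b + 1 ≤ 2 * b + 2 by omega)
  rw [← hIco, h.sum_Icc_eq_one, show 2 * b + 2 = (b + 1) * 2 by ring, pow_mul] at hgeom
  linear_combination -hgeom

theorem succ_mul_sq_pow_le_one (h : IsRydbergRoot b z) :
    ((b : ℝ) + 1) * (z ^ (b + 1)) ^ 2 ≤ 1 := by
  have hterm : ∀ i ∈ Icc (b + 1) (2 * b + 1), (z ^ (b + 1)) ^ 2 ≤ z ^ i := by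
    intro i hi
    rw [← pow_mul]
    exact pow_le_pow_of_le_one h.pos.le h.lt_one.le (by simp only [mem_Icc] at hi; omega)
  have hsum := card_nsmul_le_sum _ _ _ hterm
  rw [Nat.card_Icc, show 2 * b + 1 + 1 - (b + 1) = b + 1 by omega, h.sum_Icc_eq_one,
    nsmul_eq_mul] at hsum
  exact_mod_cast hsum

theorem mul_log_inv_pow_le (h : IsRydbergRoot b z) :
    z * Real.log (z ^ (b + 1))⁻¹ ≤ ((b : ℝ) + 1) * z ^ (b + 1) := by
  have hlog : z * Real.log z⁻¹ ≤ 1 - z := by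
    have := Real.log_le_sub_one_of_pos (inv_pos.2 h.pos)
    calc z * Real.log z⁻¹ ≤ z * (z⁻¹ - 1) := mul_le_mul_of_nonneg_left this h.pos.le
      _ = 1 - z := by field_simp [h.pos.ne']
  have hw : 1 - z ≤ z ^ (b + 1) := by
    rw [h.one_sub_eq]
    exact mul_le_of_le_one_right (pow_pos h.pos _).le (by linarith [pow_pos h.pos (b + 1)])
  calc z * Real.log (z ^ (b + 1))⁻¹ = ((b : ℝ) + 1) * (z * Real.log z⁻¹) := by
        rw [← inv_pow, Real.log_pow]; push_cast; ring
    _ ≤ ((b : ℝ) + 1) * z ^ (b + 1) := by gcongr; linarith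

theorem natCast_mul_equilibriumDensity (h : IsRydbergRoot b z) (hb : b ≠ 0) :
    (b : ℝ) * equilibriumDensity b z =
      (1 - z ^ (b + 1)) /
        ((1 - (z ^ (b + 1)) ^ 2) / (b * z ^ (b + 1)) + (1 - 2 * z ^ (b + 1))) := by
  have hz : z = 1 - z ^ (b + 1) * (1 - z ^ (b + 1)) := by linarith [h.one_sub_eq]
  have hw0 : z ^ (b + 1) ≠ 0 := (pow_pos h.pos _).ne'
  have hw1 : 1 - z ^ (b + 1) ≠ 0 := sub_ne_zero.2 (pow_lt_one₀ h.pos.le h.lt_one (by omega)).ne'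
  have hbw : (b : ℝ) * z ^ (b + 1) ≠ 0 := mul_ne_zero (Nat.cast_ne_zero.2 hb) hw0
  unfold equilibriumDensity
  rw [pow_succ z (b + 1)]
  generalize z ^ (b + 1) = w at hz hw0 hw1 hbw ⊢
  subst hz
  have hnum : (1 - (1 - w * (1 - w))) * (1 - w) = (1 - w) * (w * (1 - w)) := by ring
  have hden : 1 + (b : ℝ) - b * (1 - w * (1 - w)) - 2 * w - 2 * b * w + w * (1 - w * (1 - w)) +
      2 * b * (w * (1 - w * (1 - w))) = (1 - w) * (1 - w ^ 2 + (1 - 2 * w) * (b * w)) := by ring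
  rw [hnum, hden, mul_div_mul_left _ _ hw1, div_add' _ _ _ hbw, div_div_eq_mul_div]
  ring

end IsRydbergRoot

theorem tendsto_one_sub_div_of_tendsto {α : Type*} {l : Filter α} {w c : α → ℝ}
    (hw : Tendsto w l (𝓝 0)) (hc : Tendsto c l atTop) :
    Tendsto (fun x => (1 - w x) / ((1 - w x ^ 2) / c x + (1 - 2 * w x))) l (𝓝 1) := by
  have hnum : Tendsto (fun x => 1 - w x) l (𝓝 1) := by
    simpa using tendsto_const_nhds.sub hw
  have hden : Tendsto (fun x => (1 - w x ^ 2) / c x + (1 - 2 * w x)) l (𝓝 1) := by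
    simpa using ((tendsto_const_nhds.sub (hw.pow 2)).div_atTop hc).add
      (tendsto_const_nhds.sub (hw.const_mul 2))
  have hlim := hnum.div hden one_ne_zero
  rw [div_one] at hlim
  exact hlim

section RootSequence

variable {z : ℕ → ℝ}

theorem tendsto_pow_succ_nhds_zero_of_isRydbergRoot
    (hz : ∀ᶠ b in atTop, IsRydbergRoot b (z b)) :
    Tendsto (fun b : ℕ => z b ^ (b + 1)) atTop (𝓝 0) := by
  have hsqrt : Tendsto (fun b : ℕ => √(1 / ((b : ℝ) + 1))) atTop (𝓝 0) := by
    simpa using (tendsto_one_div_add_atTop_nhds_zero_nat (𝕜 := ℝ)).sqrt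
  refine squeeze_zero' (hz.mono fun b h => (pow_pos h.pos _).le) ?_ hsqrt
  filter_upwards [hz] with b h
  rw [Real.le_sqrt (pow_pos h.pos _).le (by positivity), le_div_iff₀ (by positivity), mul_comm]
  exact h.succ_mul_sq_pow_le_one

theorem tendsto_nhds_one_of_isRydbergRoot
    (hz : ∀ᶠ b in atTop, IsRydbergRoot b (z b)) : Tendsto z atTop (𝓝 1) := by
  have hw := tendsto_pow_succ_nhds_zero_of_isRydbergRoot hz
  have hlim : Tendsto (fun b : ℕ => 1 - z b ^ (b + 1) * (1 - z b ^ (b + 1))) atTop (𝓝 1) := by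
    simpa using tendsto_const_nhds.sub (hw.mul (tendsto_const_nhds.sub hw))
  refine hlim.congr' ?_
  filter_upwards [hz] with b h
  linarith [h.one_sub_eq]

theorem tendsto_natCast_mul_pow_succ_atTop_of_isRydbergRoot
    (hz : ∀ᶠ b in atTop, IsRydbergRoot b (z b)) :
    Tendsto (fun b : ℕ => (b : ℝ) * z b ^ (b + 1)) atTop atTop := by
  have hw := tendsto_pow_succ_nhds_zero_of_isRydbergRoot hz
  have hlog : Tendsto (fun b : ℕ => z b * Real.log (z b ^ (b + 1))⁻¹) atTop atTop :=
    (tendsto_nhds_one_of_isRydbergRoot hz).pos_mul_atTop one_pos <|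
      Real.tendsto_log_atTop.comp <| tendsto_inv_nhdsGT_zero.comp <|
        tendsto_nhdsWithin_iff.2 ⟨hw, hz.mono fun b h => pow_pos h.pos _⟩
  have hsucc : Tendsto (fun b : ℕ => ((b : ℝ) + 1) * z b ^ (b + 1)) atTop atTop :=
    tendsto_atTop_mono' _ (hz.mono fun b h => h.mul_log_inv_pow_le) hlog
  simpa [add_mul] using hsucc.atTop_add hw.neg

end RootSequence

/-- Let `z b ∈ (0,1)` be the root of `z^{b+1} + ⋯ + z^{2b+1} = 1` and
`ρ⋆(b) = (1-z)(1-z^{b+1}) / (1 + b - bz - 2z^{b+1} - 2bz^{b+1} + z^{b+2} + 2bz^{b+2})`.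
Then `b · ρ⋆(b) → 1` as `b → ∞`. -/
theorem stmt10 (z : ℕ → ℝ)
    (hz : ∀ b, 1 ≤ b → 0 < z b ∧ z b < 1 ∧
      ∑ i ∈ Finset.Icc (b + 1) (2 * b + 1), (z b) ^ i = 1) :
    Tendsto (fun b : ℕ =>
        (b : ℝ) * ((1 - z b) * (1 - (z b) ^ (b + 1)) /
          (1 + (b : ℝ) - (b : ℝ) * z b - 2 * (z b) ^ (b + 1) -
            2 * (b : ℝ) * (z b) ^ (b + 1) + (z b) ^ (b + 2) +
            2 * (b : ℝ) * (z b) ^ (b + 2))))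
      atTop (nhds 1) := by
  have hroot : ∀ᶠ b in atTop, IsRydbergRoot b (z b) :=
    eventually_atTop.2 ⟨1, fun b hb => ⟨(hz b hb).1, (hz b hb).2.1, (hz b hb).2.2⟩⟩
  refine (tendsto_one_sub_div_of_tendsto (tendsto_pow_succ_nhds_zero_of_isRydbergRoot hroot)
    (tendsto_natCast_mul_pow_succ_atTop_of_isRydbergRoot hroot)).congr' ?_
  filter_upwards [hroot, eventually_ne_atTop 0] with b h hb
  exact (h.natCast_mul_equilibriumDensity hb).symm
end

section
/- For every b ≥ 1 and N ≥ 1, the total number of jammed configurations of N Rydberg atoms with blockade range b over all lattice lengths L, i.e. ∑_L J_{N,L}, equals (b+1)^{N+1}. -/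
open scoped Classical

/-- The number `J_{N,L}` of jammed configurations of length `L` with blockade range `b`
and exactly `N` excited atoms. -/
noncomputable def J (b N L : ℕ) : ℕ :=
  ((Finset.range L).powerset.filter (fun S => RydJammed b L S ∧ S.card = N)).card

namespace Stmt19Aux

lemma mono_of_strict {f : ℕ → ℕ} {N : ℕ} (hf : ∀ p q, p < q → q < N → f p < f q) :
    ∀ p q, p ≤ q → q < N → f p ≤ f q := by
  intro p q hpq hq
  rcases eq_or_lt_of_le hpq with rfl | h
  · exact le_rfl
  · exact (hf p q h hq).le

lemma uniq {f g : ℕ → ℕ} {N : ℕ}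
    (hf : ∀ p q, p < q → q < N → f p < f q)
    (hg : ∀ p q, p < q → q < N → g p < g q)
    (h : Finset.image f (Finset.range N) = Finset.image g (Finset.range N)) :
    ∀ k < N, f k = g k := by
  intro k
  induction k using Nat.strong_induction_on with
  | _ k ih =>
    intro hk
    have h1 : f k ∈ Finset.image g (Finset.range N) := by
      rw [← h]; exact Finset.mem_image_of_mem f (Finset.mem_range.mpr hk)
    have h2 : g k ∈ Finset.image f (Finset.range N) := by
      rw [h]; exact Finset.mem_image_of_mem g (Finset.mem_range.mpr hk)
    obtain ⟨j, hj, hgj⟩ := Finset.mem_image.mp h1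
    obtain ⟨i, hi, hfi⟩ := Finset.mem_image.mp h2
    rw [Finset.mem_range] at hj hi
    have hle1 : g k ≤ f k := by
      rcases lt_or_ge j k with hjk | hjk
      · exact absurd hgj (by rw [← ih j hjk hj]; exact (hf j k hjk hk).ne)
      · calc g k ≤ g j := mono_of_strict hg k j hjk hj
          _ = f k := hgj
    have hle2 : f k ≤ g k := by
      rcases lt_or_ge i k with hik | hik
      · exact absurd hfi (by rw [ih i hik hi]; exact (hg i k hik hk).ne)
      · calc f k ≤ f i := mono_of_strict hf k i hik hi
          _ = g k := hfi
    omega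

lemma jammed_of_f (b L m : ℕ) (f : ℕ → ℕ)
    (h0 : f 0 ≤ b)
    (hlo : ∀ k, k + 1 < m + 1 → f k + (b + 1) ≤ f (k + 1))
    (hhi : ∀ k, k + 1 < m + 1 → f (k + 1) ≤ f k + (2 * b + 1))
    (hL1 : f m < L) (hL2 : L ≤ f m + b + 1) :
    RydJammed b L (Finset.image f (Finset.range (m + 1))) ∧
      (Finset.image f (Finset.range (m + 1))).card = m + 1 := by
  set S := Finset.image f (Finset.range (m + 1)) with hS
  have hstep : ∀ q, q < m + 1 → ∀ p, p < q → f p + (b + 1) ≤ f q := by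
    intro q
    induction q with
    | zero => omega
    | succ q ih =>
      intro hq p hp
      rcases Nat.lt_succ_iff_lt_or_eq.mp hp with hp' | rfl
      · have := ih (by omega) p hp'
        have := hlo q hq
        omega
      · exact hlo p hq
  have hsm : ∀ p q, p < q → q < m + 1 → f p < f q := by
    intro p q hpq hq
    have := hstep q hq p hpq; omega
  have hmono := mono_of_strict hsm
  have hmemS : ∀ s ∈ S, ∃ j, j < m + 1 ∧ f j = s := by
    intro s hs
    obtain ⟨j, hj, hfj⟩ := Finset.mem_image.mp hs
    exact ⟨j, Finset.mem_range.mp hj, hfj⟩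
  have hfS : ∀ k, k < m + 1 → f k ∈ S := fun k hk =>
    Finset.mem_image_of_mem f (Finset.mem_range.mpr hk)
  have hub : ∀ s ∈ S, s ≤ f m := by
    intro s hs
    obtain ⟨j, hj, rfl⟩ := hmemS s hs
    exact hmono j m (by omega) (by omega)
  have hlb : ∀ s ∈ S, f 0 ≤ s := by
    intro s hs
    obtain ⟨j, hj, rfl⟩ := hmemS s hs
    exact hmono 0 j (by omega) hj
  have hsub : S ⊆ Finset.range L := by
    intro s hs
    rw [Finset.mem_range]
    have := hub s hs; omega
  have hadm : RydAdmissible b L S := by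
    refine ⟨hsub, ?_⟩
    intro i hi j hj hij
    obtain ⟨p, hp, rfl⟩ := hmemS i hi
    obtain ⟨q, hq, rfl⟩ := hmemS j hj
    have hpq : p < q := by
      by_contra hc
      have := hmono q p (by omega) hp
      omega
    have := hstep q hq p hpq
    omega
  refine ⟨⟨hadm, ?_⟩, ?_⟩
  · intro t ht htS hins
    -- find s in S with |t - s| ≤ b
    have key : ∃ s ∈ S, (t < s ∧ s ≤ t + b) ∨ (s < t ∧ t ≤ s + b) := by
      rcases lt_or_ge t (f 0) with h1 | h1
      · exact ⟨f 0, hfS 0 (by omega), Or.inl ⟨h1, by omega⟩⟩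
      rcases lt_or_ge (f m) t with h2 | h2
      · exact ⟨f m, hfS m (by omega), Or.inr ⟨h2, by omega⟩⟩
      -- f 0 ≤ t ≤ f m, t ∉ S
      have htne : ∀ k, k < m + 1 → f k ≠ t := by
        intro k hk he
        exact htS (he ▸ hfS k hk)
      set K := (Finset.range (m + 1)).filter (fun k => f k ≤ t) with hK
      have hKne : K.Nonempty := ⟨0, Finset.mem_filter.mpr ⟨Finset.mem_range.mpr (by omega), h1⟩⟩
      set k := K.max' hKne with hkdef
      have hkK := K.max'_mem hKne
      rw [Finset.mem_filter, Finset.mem_range] at hkK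
      obtain ⟨hkm, hkt⟩ := hkK
      have hklt : f k < t := lt_of_le_of_ne hkt (htne k hkm)
      have hkm' : k + 1 < m + 1 := by
        rcases Nat.lt_succ_iff_lt_or_eq.mp hkm with h | h
        · omega
        · exfalso; rw [hkdef, h] at hklt; omega
      have hk1 : t < f (k + 1) := by
        by_contra hc
        push_neg at hc
        have : k + 1 ∈ K := Finset.mem_filter.mpr ⟨Finset.mem_range.mpr hkm', hc⟩
        have := Finset.le_max' K (k + 1) this
        omega
      have hgap := hhi k hkm'
      rcases le_or_gt t (f k + b) with h3 | h3
      · exact ⟨f k, hfS k (by omega), Or.inr ⟨hklt, by omega⟩⟩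
      · exact ⟨f (k + 1), hfS (k + 1) hkm', Or.inl ⟨hk1, by omega⟩⟩
    obtain ⟨s, hsS, hcase⟩ := key
    have hsIn : s ∈ insert t S := Finset.mem_insert_of_mem hsS
    have htIn : t ∈ insert t S := Finset.mem_insert_self t S
    rcases hcase with ⟨h1, h2⟩ | ⟨h1, h2⟩
    · have := hins.2 t htIn s hsIn h1; omega
    · have := hins.2 s hsIn t htIn h1; omega
  · rw [hS, Finset.card_image_of_injOn, Finset.card_range]
    intro p hp q hq he
    rw [Finset.mem_coe, Finset.mem_range] at hp hq
    by_contra hne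
    rcases Nat.lt_or_ge p q with h | h
    · exact absurd he (hsm p q h hq).ne
    · exact absurd he.symm (hsm q p (by omega) hp).ne

lemma f_of_jammed (b L m : ℕ) (S : Finset ℕ) (hj : RydJammed b L S) (hc : S.card = m + 1) :
    ∃ f : ℕ → ℕ, S = Finset.image f (Finset.range (m + 1)) ∧
      f 0 ≤ b ∧
      (∀ k, k + 1 < m + 1 → f k + (b + 1) ≤ f (k + 1) ∧ f (k + 1) ≤ f k + (2 * b + 1)) ∧
      f m < L ∧ L ≤ f m + b + 1 := by
  classical
  set e := S.orderEmbOfFin hc with he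
  set f : ℕ → ℕ := fun k => e ⟨min k m, Nat.lt_succ_of_le (min_le_right k m)⟩ with hf
  have hfk : ∀ k (hk : k < m + 1), f k = e ⟨k, hk⟩ := by
    intro k hk
    have hmin : min k m = k := by omega
    simp [hf, hmin]
  have hsm : ∀ p q, p < q → q < m + 1 → f p < f q := by
    intro p q hpq hq
    rw [hfk p (by omega), hfk q hq]
    exact (S.orderEmbOfFin hc).strictMono (by simp [Fin.lt_def]; omega)
  have hmono := mono_of_strict hsm
  have hmem : ∀ k, k < m + 1 → f k ∈ S := by
    intro k hk
    rw [hfk k hk]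
    exact Finset.orderEmbOfFin_mem S hc _
  have hSeq : S = Finset.image f (Finset.range (m + 1)) := by
    have hsub : Finset.image f (Finset.range (m + 1)) ⊆ S := by
      intro s hs
      obtain ⟨j, hj, rfl⟩ := Finset.mem_image.mp hs
      exact hmem j (Finset.mem_range.mp hj)
    have hcard : (Finset.image f (Finset.range (m + 1))).card = m + 1 := by
      rw [Finset.card_image_of_injOn, Finset.card_range]
      intro p hp q hq hpq
      rw [Finset.mem_coe, Finset.mem_range] at hp hq
      by_contra hne
      rcases Nat.lt_or_ge p q with h | h
      · exact absurd hpq (hsm p q h hq).ne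
      · exact absurd hpq.symm (hsm q p (by omega) hp).ne
    exact (Finset.eq_of_subset_of_card_le hsub (by omega)).symm
  -- every element of S is some f j
  have hmemS : ∀ s ∈ S, ∃ j, j < m + 1 ∧ f j = s := by
    intro s hs
    rw [hSeq] at hs
    obtain ⟨j, hj, hfj⟩ := Finset.mem_image.mp hs
    exact ⟨j, Finset.mem_range.mp hj, hfj⟩
  have hrange : ∀ k, k < m + 1 → f k < L := by
    intro k hk
    have := hj.1.1 (hmem k hk)
    rwa [Finset.mem_range] at this
  have hadm := hj.1.2
  -- lower gap from admissibility
  have hlo : ∀ k, k + 1 < m + 1 → f k + (b + 1) ≤ f (k + 1) := by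
    intro k hk
    have h1 := hadm (f k) (hmem k (by omega)) (f (k + 1)) (hmem (k + 1) hk)
      (hsm k (k + 1) (by omega) hk)
    omega
  -- helper to derive contradictions from insertability
  have hins : ∀ t, t < L → t ∉ S → ∃ s ∈ S, (t < s ∧ s ≤ t + b) ∨ (s < t ∧ t ≤ s + b) := by
    intro t ht htS
    by_contra hno
    push_neg at hno
    refine hj.2 t ht htS ⟨?_, ?_⟩
    · intro x hx
      rcases Finset.mem_insert.mp hx with rfl | hx'
      · exact Finset.mem_range.mpr ht
      · exact hj.1.1 hx'
    · intro i hi j hjx hij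
      rcases Finset.mem_insert.mp hi with rfl | hi'
      · rcases Finset.mem_insert.mp hjx with rfl | hj'
        · omega
        · have := hno j hj'
          omega
      · rcases Finset.mem_insert.mp hjx with rfl | hj'
        · have := hno i hi'
          omega
        · exact hadm i hi' j hj' hij
  have h0 : f 0 ≤ b := by
    by_contra hc0
    push_neg at hc0
    have hmin : ∀ s ∈ S, f 0 ≤ s := by
      intro s hs
      obtain ⟨j, hjm, rfl⟩ := hmemS s hs
      exact hmono 0 j (by omega) hjm
    set t := f 0 - (b + 1) with ht
    have htL : t < L := by have := hrange 0 (by omega); omega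
    have htS : t ∉ S := by
      intro hmem'
      have := hmin t hmem'
      omega
    obtain ⟨s, hsS, hcase⟩ := hins t htL htS
    have := hmin s hsS
    omega
  have hL2 : L ≤ f m + b + 1 := by
    by_contra hcL
    push_neg at hcL
    have hmax : ∀ s ∈ S, s ≤ f m := by
      intro s hs
      obtain ⟨j, hjm, rfl⟩ := hmemS s hs
      exact hmono j m (by omega) (by omega)
    set t := f m + b + 1 with ht
    have htL : t < L := by omega
    have htS : t ∉ S := by
      intro hmem'
      have := hmax t hmem'
      omega
    obtain ⟨s, hsS, hcase⟩ := hins t htL htS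
    have := hmax s hsS
    omega
  have hhi : ∀ k, k + 1 < m + 1 → f (k + 1) ≤ f k + (2 * b + 1) := by
    intro k hk
    by_contra hcg
    push_neg at hcg
    set t := f k + (b + 1) with ht
    have hfk1 : f (k + 1) < L := hrange (k + 1) hk
    have htL : t < L := by omega
    have hsep : ∀ s ∈ S, s ≤ f k ∨ f (k + 1) ≤ s := by
      intro s hs
      obtain ⟨j, hjm, rfl⟩ := hmemS s hs
      rcases le_or_gt j k with h | h
      · exact Or.inl (hmono j k h (by omega))
      · exact Or.inr (hmono (k + 1) j h hjm)
    have htS : t ∉ S := by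
      intro hmem'
      rcases hsep t hmem' with h | h <;> omega
    obtain ⟨s, hsS, hcase⟩ := hins t htL htS
    rcases hsep s hsS with h | h <;> omega
  exact ⟨f, hSeq, h0, fun k hk => ⟨hlo k hk, hhi k hk⟩, hrange m (by omega), hL2⟩

end Stmt19Aux

namespace Stmt19Aux

def la (m : ℕ) (a : Fin (m + 2) → ℕ) (j : ℕ) : ℕ :=
  if h : j < m + 2 then a ⟨j, h⟩ else 0

def posf (b m : ℕ) (a : Fin (m + 2) → ℕ) (k : ℕ) : ℕ :=
  (∑ j ∈ Finset.range (k + 1), la m a j) + k * (b + 1)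

lemma posf_zero (b m : ℕ) (a : Fin (m + 2) → ℕ) : posf b m a 0 = la m a 0 := by
  simp [posf]

lemma posf_succ (b m : ℕ) (a : Fin (m + 2) → ℕ) (k : ℕ) :
    posf b m a (k + 1) = posf b m a k + la m a (k + 1) + (b + 1) := by
  simp [posf, Finset.sum_range_succ]; ring

lemma posf_strict (b m : ℕ) (a : Fin (m + 2) → ℕ) : StrictMono (posf b m a) := by
  apply strictMono_nat_of_lt_succ
  intro n
  rw [posf_succ]
  omega

end Stmt19Aux

open Stmt19Aux in
theorem stmt19' (b N : ℕ) (hb : 1 ≤ b) (hN : 1 ≤ N) :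
    ∑ L ∈ Finset.range ((2 * b + 1) * N + 1),
      ((Finset.range L).powerset.filter (fun S => RydJammed b L S ∧ S.card = N)).card
      = (b + 1) ^ (N + 1) := by
  classical
  obtain ⟨m, rfl⟩ := Nat.exists_eq_succ_of_ne_zero (by omega : N ≠ 0)
  set M := (2 * b + 1) * (m + 1) + 1 with hM
  set T := (Finset.range M).sigma
    (fun L => (Finset.range L).powerset.filter (fun S => RydJammed b L S ∧ S.card = m + 1))
    with hT
  have h1 : ∑ L ∈ Finset.range M,
      ((Finset.range L).powerset.filter (fun S => RydJammed b L S ∧ S.card = m + 1)).card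
      = T.card := by
    rw [hT, Finset.card_sigma]
  rw [h1]
  set A := Fintype.piFinset (fun _ : Fin (m + 2) => Finset.range (b + 1)) with hA
  have h2 : A.card = T.card := by
    apply Finset.card_bij (fun a _ =>
      (⟨posf b m a m + 1 + la m a (m + 1),
        Finset.image (posf b m a) (Finset.range (m + 1))⟩ : Σ _ : ℕ, Finset ℕ))
    · -- maps into T
      intro a ha
      have hla : ∀ j, la m a j ≤ b := by
        intro j
        unfold la
        split
        · next h =>
          have := Fintype.mem_piFinset.mp ha ⟨j, h⟩
          rw [Finset.mem_range] at this
          omega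
        · omega
      have hjam := jammed_of_f b (posf b m a m + 1 + la m a (m + 1)) m (posf b m a)
        (by rw [posf_zero]; exact hla 0)
        (by intro k hk; rw [posf_succ]; have := hla (k + 1); omega)
        (by intro k hk; rw [posf_succ]; have := hla (k + 1); omega)
        (by omega)
        (by have := hla (m + 1); omega)
      rw [hT, Finset.mem_sigma]
      constructor
      · rw [Finset.mem_range]
        show posf b m a m + 1 + la m a (m + 1) < M
        have hsum : ∑ j ∈ Finset.range (m + 1), la m a j ≤ (m + 1) * b := by
          calc ∑ j ∈ Finset.range (m + 1), la m a j
              ≤ ∑ _j ∈ Finset.range (m + 1), b := Finset.sum_le_sum (fun j _ => hla j)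
            _ = (m + 1) * b := by rw [Finset.sum_const, Finset.card_range, smul_eq_mul]
        have hpm : posf b m a m ≤ (m + 1) * b + m * (b + 1) := by
          unfold posf; omega
        have hkey : (m + 1) * b + m * (b + 1) + 1 + b = (2 * b + 1) * (m + 1) := by ring
        have := hla (m + 1)
        omega
      · rw [Finset.mem_filter, Finset.mem_powerset]
        exact ⟨hjam.1.1.1, hjam.1, hjam.2⟩
    · -- injective
      intro a1 h1a a2 h2a heq
      have hfst : posf b m a1 m + 1 + la m a1 (m + 1) = posf b m a2 m + 1 + la m a2 (m + 1) := by
        exact congrArg Sigma.fst heq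
      have hsnd : Finset.image (posf b m a1) (Finset.range (m + 1))
          = Finset.image (posf b m a2) (Finset.range (m + 1)) := by
        have := (Sigma.mk.inj_iff.mp heq).2
        exact eq_of_heq this
      have hposeq : ∀ k < m + 1, posf b m a1 k = posf b m a2 k :=
        uniq (fun p q h _ => posf_strict b m a1 h) (fun p q h _ => posf_strict b m a2 h) hsnd
      have hlaeq : ∀ j, j < m + 2 → la m a1 j = la m a2 j := by
        intro j hj
        rcases Nat.eq_zero_or_pos j with rfl | hj0
        · have := hposeq 0 (by omega)
          rw [posf_zero, posf_zero] at this
          exact this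
        rcases Nat.lt_or_ge j (m + 1) with hjm | hjm
        · obtain ⟨k, rfl⟩ : ∃ k, j = k + 1 := ⟨j - 1, by omega⟩
          have e1 := posf_succ b m a1 k
          have e2 := posf_succ b m a2 k
          have q1 := hposeq k (by omega)
          have q2 := hposeq (k + 1) hjm
          omega
        · have hjeq : j = m + 1 := by omega
          subst hjeq
          have := hposeq m (by omega)
          omega
      funext i
      have h := hlaeq i.1 i.isLt
      unfold la at h
      rw [dif_pos i.isLt, dif_pos i.isLt] at h
      simpa using h
    · -- surjective
      rintro ⟨L, S⟩ hx
      rw [hT, Finset.mem_sigma, Finset.mem_filter, Finset.mem_powerset, Finset.mem_range] at hx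
      obtain ⟨hLM, hSsub, hjam, hcard⟩ := hx
      obtain ⟨f, hSeq, h0, hgap, hL1, hL2⟩ := f_of_jammed b L m S hjam hcard
      set a : Fin (m + 2) → ℕ := fun i =>
        if i.1 = 0 then f 0
        else if i.1 < m + 1 then f i.1 - f (i.1 - 1) - (b + 1)
        else L - f m - 1 with ha
      have hle : ∀ i : Fin (m + 2), a i ≤ b := by
        intro i
        rw [ha]
        dsimp only
        split
        · exact h0
        · next hne =>
          split
          · next hlt =>
            obtain ⟨k, hk⟩ : ∃ k, i.1 = k + 1 := ⟨i.1 - 1, by omega⟩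
            rw [hk]
            have := hgap k (by omega)
            simp only [Nat.add_sub_cancel]
            omega
          · omega
      have haA : a ∈ A := by
        rw [hA, Fintype.mem_piFinset]
        intro i
        rw [Finset.mem_range]
        have := hle i
        omega
      have hlav : ∀ j (hj : j < m + 2), la m a j = a ⟨j, hj⟩ := by
        intro j hj
        unfold la
        rw [dif_pos hj]
      have hav : ∀ j (hj : j < m + 2), a ⟨j, hj⟩ =
          if j = 0 then f 0 else if j < m + 1 then f j - f (j - 1) - (b + 1)
          else L - f m - 1 := fun j hj => rfl
      have hpos : ∀ k, k < m + 1 → posf b m a k = f k := by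
        intro k
        induction k with
        | zero =>
          intro _
          rw [posf_zero, hlav 0 (by omega), hav 0 (by omega), if_pos rfl]
        | succ k ih =>
          intro hk
          have hik := ih (by omega)
          have hkne : k + 1 ≠ 0 := by omega
          rw [posf_succ, hik, hlav (k + 1) (by omega), hav (k + 1) (by omega),
            if_neg hkne, if_pos hk]
          have := hgap k hk
          simp only [Nat.add_sub_cancel]
          omega
      have hS' : Finset.image (posf b m a) (Finset.range (m + 1)) = S := by
        rw [hSeq]
        apply Finset.image_congr
        intro x hx
        rw [Finset.mem_coe, Finset.mem_range] at hx
        exact hpos x hx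
      have hL' : posf b m a m + 1 + la m a (m + 1) = L := by
        rw [hpos m (by omega), hlav (m + 1) (by omega), hav (m + 1) (by omega),
          if_neg (by omega : ¬ (m + 1 = 0)), if_neg (by omega : ¬ (m + 1 < m + 1))]
        omega
      exact ⟨a, haA, by rw [hS', hL']⟩
  rw [← h2, hA, Fintype.card_piFinset]
  simp [Finset.card_range]

/-- The total number of jammed configurations of `N ≥ 1` Rydberg atoms with blockade
range `b` over all lattice lengths `L` equals `(b+1)^{N+1}`. (Jammed configurations
with `N` atoms only exist for `L ≤ (2b+1)N`, so the sum over all `L` is finite.) -/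
theorem stmt19 (b N : ℕ) (hb : 1 ≤ b) (hN : 1 ≤ N) :
    ∑ L ∈ Finset.range ((2 * b + 1) * N + 1), J b N L = (b + 1) ^ (N + 1) := by
  simpa only [J] using stmt19' b N hb hN
end
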